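/- Every finite chordal simple graph on n ≥ 1 vertices admits at least 2^(n−1) perfect elimination orderings. -/

import Mathlib

/-!
Dirac's lemma: if `C` is a component of `G[U] - N[b]`, the vertices adjacent to both `b` and `C`
form a clique, since two non-adjacent ones would be joined through `C` by a shortest, hence
chordless, path, and `b` would close it into a cycle of length at least four without a chord.
Induction on `U` then gives, in every `U` not contained in a clique `K`, a vertex outside `K`
that is simplicial in `U`; so a chordal graph on at least two vertices has two distinct
simplicial vertices `v₁, v₂`. Putting `vᵢ` first, followed by any perfect elimination ordering
of the chordal graph `G - vᵢ`, gives two disjoint families of perfect elimination orderings of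
`G`, each of size at least `2 ^ (n - 2)` by induction.
-/

/-- A simple graph is chordal if every cycle of length at least four has a
chord: an edge of the graph joining two vertices of the cycle that are not
consecutive on the cycle (i.e. the edge is not an edge of the cycle). -/
def SimpleGraph.IsChordal {V : Type*} (G : SimpleGraph V) : Prop :=
  ∀ (v : V) (c : G.Walk v v), c.IsCycle → 4 ≤ c.length →
    ∃ x y : V, x ∈ c.support ∧ y ∈ c.support ∧ G.Adj x y ∧ s(x, y) ∉ c.edges

/-- `v` is simplicial in the subgraph of `G` induced by the vertex set `S`:
any two distinct neighbors of `v` inside `S` are adjacent. -/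
def SimpleGraph.IsSimplicialIn {V : Type*} (G : SimpleGraph V) (S : Set V)
    (v : V) : Prop :=
  ∀ x y : V, x ∈ S → y ∈ S → G.Adj v x → G.Adj v y → x ≠ y → G.Adj x y

/-- `σ` is a perfect elimination ordering of `G`: for each `i`, the vertex
`σ i` is simplicial in the subgraph induced by `{σ j | j ≥ i}`. -/
def IsPerfectEliminationOrdering {V : Type*} {n : ℕ} (G : SimpleGraph V)
    (σ : Fin n ≃ V) : Prop :=
  ∀ i : Fin n, G.IsSimplicialIn {x : V | ∃ j : Fin n, i ≤ j ∧ σ j = x} (σ i)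

theorem Nat.card_subtype_add_card_subtype_le {α : Type*} [Finite α] {p q r : α → Prop}
    (hp : ∀ x, p x → r x) (hq : ∀ x, q x → r x) (hpq : ∀ x, p x → ¬q x) :
    Nat.card {x // p x} + Nat.card {x // q x} ≤ Nat.card {x // r x} := by
  rw [← Nat.card_sum]
  refine Nat.card_le_card_of_injective (Sum.elim (fun x => ⟨x, hp x x.2⟩) fun x => ⟨x, hq x x.2⟩)
    (Function.Injective.sumElim ?_ ?_ ?_)
  · exact fun x y h => Subtype.ext congr(Subtype.val $h)
  · exact fun x y h => Subtype.ext congr(Subtype.val $h)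
  · exact fun x y h => hpq x x.2 (congr(Subtype.val $h) ▸ y.2)

namespace SimpleGraph

variable {V : Type*} {G : SimpleGraph V}

namespace Walk

theorem exists_isSubwalk_of_mem_support {u v x y : V} (p : G.Walk u v) (hx : x ∈ p.support)
    (hy : y ∈ p.support) :
    (∃ q : G.Walk x y, q.IsSubwalk p) ∨ ∃ q : G.Walk y x, q.IsSubwalk p := by
  classical
  rw [← p.take_spec hx, mem_support_append_iff] at hy
  rcases hy with hy | hy
  · exact .inr ⟨_, ((p.takeUntil x hx).isSubwalk_dropUntil hy).trans (p.isSubwalk_takeUntil hx)⟩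
  · exact .inl ⟨_, ((p.dropUntil x hx).isSubwalk_takeUntil hy).trans (p.isSubwalk_dropUntil hx)⟩

theorem eq_toWalk_of_length_eq_one {u v : V} (p : G.Walk u v) (hp : p.length = 1) :
    p = (adj_of_length_eq_one hp).toWalk := by
  cases p with
  | nil => simp at hp
  | cons h q => cases q with
    | nil => rfl
    | cons => simp at hp

theorem isChordless_of_length_eq_dist {u v : V} {p : G.Walk u v} (hp : p.length = G.dist u v) :
    p.IsChordless := by
  have key {x y : V} (q : G.Walk x y) (hq : q.IsSubwalk p) (hxy : G.Adj x y) :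
      hxy.toWalk.IsSubwalk p := by
    have hlen : q.length = 1 := by
      rw [length_eq_dist_of_subwalk hp hq, dist_eq_one_iff_adj.2 hxy]
    rwa [q.eq_toWalk_of_length_eq_one hlen] at hq
  refine isChordless_iff_forall_mem_edges.2 fun x y hx hy hxy => ?_
  rw [← isSubwalk_toWalk_iff_mem_edges hxy]
  rcases p.exists_isSubwalk_of_mem_support hx hy with ⟨q, hq⟩ | ⟨q, hq⟩
  · exact .inl (key q hq hxy)
  · exact .inr (key q hq hxy.symm)

theorem IsChordless.map {V' : Type*} {G' : SimpleGraph V'} (f : G ↪g G') {u v : V}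
    {p : G.Walk u v} (hp : p.IsChordless) : (p.map f.toHom).IsChordless := by
  refine isChordless_iff_forall_mem_edges.2 fun x y hx hy hxy => ?_
  rw [support_map, List.mem_map] at hx hy
  obtain ⟨x, hx, rfl⟩ := hx
  obtain ⟨y, hy, rfl⟩ := hy
  rw [edges_map]
  exact List.mem_map_of_mem (hp.mem_edges hx hy (f.map_adj_iff.1 hxy))

end Walk

theorem IsChordal.exists_adj_of_isChordless (hG : G.IsChordal) {s t b : V} {p : G.Walk s t}
    (hp : p.IsPath) (hc : p.IsChordless) (hlen : 2 ≤ p.length) (hb : b ∉ p.support)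
    (hbs : G.Adj b s) (hbt : G.Adj b t) : ∃ z ∈ p.support, z ≠ s ∧ z ≠ t ∧ G.Adj b z := by
  by_contra! hz
  have hst : s ≠ t := by
    rintro rfl
    simp [Walk.isPath_iff_nil.1 hp |>.eq_nil] at hlen
  let c : G.Walk b b := .cons hbs (p.concat hbt.symm)
  have hcyc : c.IsCycle := by
    refine (Walk.cons_isCycle_iff _ _).2 ⟨hp.concat hb _, fun h => ?_⟩
    rw [Walk.edges_concat, List.concat_eq_append, List.mem_append, List.mem_singleton] at h
    rcases h with h | h
    · exact hb (p.fst_mem_support_of_mem_edges h)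
    · rcases Sym2.eq_iff.1 h with ⟨rfl, -⟩ | ⟨-, rfl⟩
      · exact G.irrefl hbt
      · exact hst rfl
  have hsupp : ∀ x ∈ c.support, x = b ∨ x ∈ p.support := by
    simp only [c, Walk.support_cons, Walk.support_concat, List.mem_cons, List.mem_append]
    tauto
  have hbc : ∀ z ∈ p.support, G.Adj b z → s(b, z) ∈ c.edges := by
    intro z hzp hbz
    by_cases hzs : z = s
    · simp [c, hzs]
    by_cases hzt : z = t
    · simp [c, hzt, Sym2.eq_swap]
    exact absurd hbz (hz z hzp hzs hzt)
  obtain ⟨x, y, hx, hy, hxy, hxyc⟩ := hG b c hcyc (by simp [c]; omega)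
  rcases hsupp x hx with rfl | hxp <;> rcases hsupp y hy with rfl | hyp
  · exact G.irrefl hxy
  · exact hxyc (hbc y hyp hxy)
  · exact hxyc (Sym2.eq_swap ▸ hbc x hxp hxy.symm)
  · exact hxyc (by simp [c, hc.mem_edges hxp hyp hxy])

theorem IsChordal.isClique_of_connected (hG : G.IsChordal) {b : V} {C : Set V} (hbC : b ∉ C)
    (hC : ∀ c ∈ C, ¬G.Adj b c)
    (hconn : ∀ c ∈ C, ∀ c' ∈ C, ∃ w : G.Walk c c', ∀ u ∈ w.support, u ∈ C) :
    G.IsClique {v | G.Adj b v ∧ ∃ c ∈ C, G.Adj c v} := by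
  rintro s ⟨hbs, cs, hcs, hcss⟩ t ⟨hbt, ct, hct, hctt⟩ hst
  by_contra hnadj
  let T : Set V := insert s (insert t C)
  obtain ⟨w, hw⟩ := hconn cs hcs ct hct
  have hwT : ∀ u ∈ ((w.cons hcss.symm).concat hctt).support, u ∈ T := by
    simp only [Walk.support_concat, Walk.support_cons, List.mem_append, List.mem_cons]
    rintro u ((rfl | hu) | hu | hu)
    · exact .inl rfl
    · exact .inr (.inr (hw u hu))
    · exact .inr (.inl hu)
    · simp at hu
  have hreach : (G.induce T).Reachable ⟨s, .inl rfl⟩ ⟨t, .inr (.inl rfl)⟩ :=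
    ⟨((w.cons hcss.symm).concat hctt).induce T hwT⟩
  obtain ⟨p, hp, hplen⟩ := hreach.exists_path_of_dist
  have hdist := hreach.one_lt_dist_of_ne_of_not_adj (fun h => hst congr(Subtype.val $h))
    (by simpa using hnadj)
  let f : G.induce T ↪g G := Embedding.induce T
  have hbp : b ∉ (p.map f.toHom).support := by
    simp only [Walk.support_map, List.mem_map, not_exists, not_and]
    rintro ⟨u, rfl | rfl | hu⟩ - rfl
    · exact G.irrefl hbs
    · exact G.irrefl hbt
    · exact hbC hu
  obtain ⟨z, hz, hzs, hzt, hbz⟩ := hG.exists_adj_of_isChordless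
    (hp.map f.injective) ((Walk.isChordless_of_length_eq_dist hplen).map f)
    (by rw [Walk.length_map]; omega) hbp hbs hbt
  simp only [Walk.support_map, List.mem_map] at hz
  obtain ⟨⟨z, hzT⟩, -, rfl⟩ := hz
  rcases hzT with rfl | rfl | hzC
  · exact hzs rfl
  · exact hzt rfl
  · exact hC z hzC hbz

theorem exists_component_of_not_adj {U : Set V} {a b : V} (ha : a ∈ U) (hab : a ≠ b)
    (hnadj : ¬G.Adj b a) :
    ∃ C ⊆ U, a ∈ C ∧ b ∉ C ∧ (∀ c ∈ C, ¬G.Adj b c) ∧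
      (∀ c ∈ C, ∀ c' ∈ C, ∃ w : G.Walk c c', ∀ u ∈ w.support, u ∈ C) ∧
      ∀ c ∈ C, ∀ u ∈ U, G.Adj c u → u ∈ C ∨ G.Adj b u := by
  classical
  let D : Set V := {v | v ∈ U ∧ v ≠ b ∧ ¬G.Adj b v}
  let C : Set V := {v | ∃ w : G.Walk a v, ∀ u ∈ w.support, u ∈ D}
  have hCD : C ⊆ D := fun v ⟨w, hw⟩ => hw v w.end_mem_support
  have hwalk : ∀ c ∈ C, ∃ w : G.Walk a c, ∀ u ∈ w.support, u ∈ C := by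
    rintro c ⟨w, hw⟩
    exact ⟨w, fun u hu => ⟨w.takeUntil u hu,
      fun x hx => hw x (w.support_takeUntil_subset_support hu hx)⟩⟩
  refine ⟨C, fun v hv => (hCD hv).1, ⟨.nil, ?_⟩, fun h => (hCD h).2.1 rfl,
    fun c hc => (hCD hc).2.2, fun c hc c' hc' => ?_, fun c hc u hu hcu => ?_⟩
  · simpa only [Walk.support_nil, List.mem_singleton, forall_eq] using ⟨ha, hab, hnadj⟩
  · obtain ⟨w, hw⟩ := hwalk c hc
    obtain ⟨w', hw'⟩ := hwalk c' hc'
    refine ⟨w.reverse.append w', fun u hu => ?_⟩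
    rw [Walk.mem_support_append_iff, Walk.support_reverse, List.mem_reverse] at hu
    exact hu.elim (hw u) (hw' u)
  · refine or_iff_not_imp_right.2 fun hbu => ?_
    obtain ⟨w, hw⟩ := hc
    refine ⟨w.concat hcu, fun x hx => ?_⟩
    rw [Walk.support_concat, List.mem_append, List.mem_singleton] at hx
    rcases hx with hx | rfl
    · exact hw x hx
    · exact ⟨hu, fun h => (hCD ⟨w, hw⟩).2.2 (h ▸ hcu.symm), hbu⟩

/-- A vertex of `W = C ∪ (U ∩ K)` outside the clique `K` lies in `C`, and all its neighbours
in `U` lie in `W`: so simplicial in `W` means simplicial in `U`. -/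
theorem IsChordal.exists_isSimplicialIn_of_not_adj (hG : G.IsChordal) {U : Set V}
    (ih : ∀ W ⊂ U, ∀ {K : Set V}, G.IsClique K → ¬W ⊆ K → ∃ x ∈ W, x ∉ K ∧ G.IsSimplicialIn W x)
    {a b : V} (ha : a ∈ U) (hb : b ∈ U) (hab : a ≠ b) (hnadj : ¬G.Adj b a) :
    ∃ x ∈ U, x ≠ b ∧ ¬G.Adj b x ∧ G.IsSimplicialIn U x := by
  obtain ⟨C, hCU, haC, hbC, hCb, hconn, hnbr⟩ := exists_component_of_not_adj ha hab hnadj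
  let K : Set V := {v | G.Adj b v ∧ ∃ c ∈ C, G.Adj c v}
  let W : Set V := C ∪ (U ∩ K)
  have hWU : W ⊂ U := by
    refine Set.ssubset_iff_of_subset (fun v hv => hv.elim (@hCU v) And.left) |>.2 ⟨b, hb, ?_⟩
    rintro (h | ⟨-, hbb, -⟩)
    · exact hbC h
    · exact G.irrefl hbb
  obtain ⟨x, hxW, hxK, hx⟩ := ih W hWU (hG.isClique_of_connected hbC hCb hconn)
    fun h => hnadj (h (.inl haC)).1
  have hxC : x ∈ C := hxW.resolve_right fun h => hxK h.2
  have hnbrW : ∀ y ∈ U, G.Adj x y → y ∈ W := fun y hy hxy =>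
    (hnbr x hxC y hy hxy).imp_right fun hby => ⟨hy, hby, x, hxC, hxy⟩
  refine ⟨x, hCU hxC, fun h => hbC (h ▸ hxC), hCb x hxC, ?_⟩
  exact fun y z hy hz hxy hxz hyz => hx y z (hnbrW y hy hxy) (hnbrW z hz hxz) hxy hxz hyz

theorem IsChordal.exists_isSimplicialIn_notMem [Finite V] (hG : G.IsChordal) (U : Set V)
    {K : Set V} (hK : G.IsClique K) (hUK : ¬U ⊆ K) : ∃ x ∈ U, x ∉ K ∧ G.IsSimplicialIn U x := by
  induction U using WellFoundedLT.induction generalizing K with | _ U ih =>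
  by_cases hU : G.IsClique U
  · obtain ⟨a, haU, haK⟩ := Set.not_subset.1 hUK
    exact ⟨a, haU, haK, fun x y hx hy _ _ hxy => hU hx hy hxy⟩
  obtain ⟨a, ha, b, hb, hab, hnadj⟩ : ∃ a ∈ U, ∃ b ∈ U, a ≠ b ∧ ¬G.Adj b a := by
    simpa [IsClique, Set.Pairwise, adj_comm] using hU
  obtain ⟨x, hxU, hxb, hbx, hx⟩ := hG.exists_isSimplicialIn_of_not_adj ih ha hb hab hnadj
  obtain ⟨y, hyU, hyx, hxy, hy⟩ :=
    hG.exists_isSimplicialIn_of_not_adj ih hb hxU hxb.symm (fun h => hbx h.symm)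
  by_cases hxK : x ∈ K
  · exact ⟨y, hyU, fun hyK => hxy (hK hxK hyK hyx.symm), hy⟩
  · exact ⟨x, hxU, hxK, hx⟩

theorem IsChordal.exists_ne_isSimplicialIn_univ [Finite V] [Nontrivial V] (hG : G.IsChordal) :
    ∃ v₁ v₂, v₁ ≠ v₂ ∧ G.IsSimplicialIn Set.univ v₁ ∧ G.IsSimplicialIn Set.univ v₂ := by
  obtain ⟨v₁, -, -, h₁⟩ := hG.exists_isSimplicialIn_notMem Set.univ (isClique_empty (G := G))
    (by simp)
  obtain ⟨v₂, -, h₁₂, h₂⟩ := hG.exists_isSimplicialIn_notMem Set.univ (isClique_singleton v₁)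
    fun h => (exists_ne v₁).elim fun w hw => hw (h (Set.mem_univ w))
  exact ⟨v₁, v₂, Ne.symm h₁₂, h₁, h₂⟩

theorem IsChordal.of_embedding {V' : Type*} {G' : SimpleGraph V'} (f : G' ↪g G)
    (hG : G.IsChordal) : G'.IsChordal := by
  intro v c hc hlen
  obtain ⟨x, y, hx, hy, hxy, hxyc⟩ :=
    hG (f v) (c.map f.toHom) (hc.map f.injective) (by rwa [Walk.length_map])
  rw [Walk.support_map, List.mem_map] at hx hy
  obtain ⟨x, hx, rfl⟩ := hx
  obtain ⟨y, hy, rfl⟩ := hy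
  refine ⟨x, y, hx, hy, f.map_adj_iff.1 hxy, fun h => hxyc ?_⟩
  rw [Walk.edges_map]
  exact List.mem_map_of_mem h

end SimpleGraph

section PerfectEliminationOrdering

variable {V : Type*} [DecidableEq V] {G : SimpleGraph V}

/-- Prepend `v` to an ordering of the remaining vertices. -/
def consEquiv {m : ℕ} (v : V) (σ : Fin m ≃ {w // w ≠ v}) : Fin (m + 1) ≃ V :=
  (finSuccEquiv m).trans (σ.optionCongr.trans (Equiv.optionSubtypeNe v))

@[simp] theorem consEquiv_succ {m : ℕ} (v : V) (σ : Fin m ≃ {w // w ≠ v}) (j : Fin m) :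
    consEquiv v σ j.succ = σ j := by
  simp [consEquiv]

theorem IsPerfectEliminationOrdering.consEquiv {m : ℕ} {v : V}
    (hv : G.IsSimplicialIn Set.univ v) {σ : Fin m ≃ {w // w ≠ v}}
    (hσ : IsPerfectEliminationOrdering (G.induce {w | w ≠ v}) σ) :
    IsPerfectEliminationOrdering G (consEquiv v σ) := by
  intro i
  induction i using Fin.cases with
  | zero => exact fun x y _ _ => hv x y trivial trivial
  | succ i =>
    rintro _ _ ⟨j, hij, rfl⟩ ⟨k, hik, rfl⟩ hj hk hjk
    obtain ⟨j, rfl⟩ := Fin.exists_succ_eq.2 (Fin.ne_zero_of_lt (Fin.succ_pos i |>.trans_le hij))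
    obtain ⟨k, rfl⟩ := Fin.exists_succ_eq.2 (Fin.ne_zero_of_lt (Fin.succ_pos i |>.trans_le hik))
    simp only [consEquiv_succ] at hj hk hjk ⊢
    exact hσ i (σ j) (σ k) ⟨j, Fin.succ_le_succ_iff.1 hij, rfl⟩
      ⟨k, Fin.succ_le_succ_iff.1 hik, rfl⟩ hj hk fun h => hjk congr(Subtype.val $h)

theorem card_peo_induce_le_card_peo_apply_zero_eq [Finite V] {m : ℕ} {v : V}
    (hv : G.IsSimplicialIn Set.univ v) :
    Nat.card {σ : Fin m ≃ {w // w ≠ v} // IsPerfectEliminationOrdering (G.induce {w | w ≠ v}) σ}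
      ≤ Nat.card {σ : Fin (m + 1) ≃ V // IsPerfectEliminationOrdering G σ ∧ σ 0 = v} := by
  refine Nat.card_le_card_of_injective (fun σ => ⟨consEquiv v σ.1, σ.2.consEquiv hv, rfl⟩)
    fun σ τ h => Subtype.ext (Equiv.ext fun j => Subtype.ext ?_)
  simpa using congr(($h).1 j.succ)

end PerfectEliminationOrdering

theorem one_le_card_peo_of_card_le_one {V : Type*} [Fintype V] {n : ℕ} (G : SimpleGraph V)
    (hn : Fintype.card V = n) (h : n ≤ 1) :
    1 ≤ Nat.card {σ : Fin n ≃ V // IsPerfectEliminationOrdering G σ} := by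
  have : Subsingleton V := Fintype.card_le_one_iff_subsingleton.1 (hn ▸ h)
  have : Nonempty {σ : Fin n ≃ V // IsPerfectEliminationOrdering G σ} :=
    ⟨(Fintype.equivFinOfCardEq hn).symm,
      fun _ x y _ _ _ _ hxy => (hxy (Subsingleton.elim x y)).elim⟩
  exact Nat.card_pos

theorem chordal_many_peo_general {V : Type*} [Fintype V] {n : ℕ}
    (G : SimpleGraph V) (hG : G.IsChordal)
    (hn : Fintype.card V = n) :
    2 ^ (n - 1) ≤ Nat.card {σ : Fin n ≃ V // IsPerfectEliminationOrdering G σ} := by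
  classical
  induction n generalizing V with
  | zero => simpa using one_le_card_peo_of_card_le_one G hn zero_le_one
  | succ m ih =>
    rcases Nat.eq_zero_or_pos m with rfl | hm
    · simpa using one_le_card_peo_of_card_le_one G hn le_rfl
    have : Nontrivial V := Fintype.one_lt_card_iff_nontrivial.1 (by omega)
    obtain ⟨v₁, v₂, hne, h₁, h₂⟩ := hG.exists_ne_isSimplicialIn_univ
    have hfiber (v : V) (hv : G.IsSimplicialIn Set.univ v) : 2 ^ (m - 1) ≤
        Nat.card {σ : Fin (m + 1) ≃ V // IsPerfectEliminationOrdering G σ ∧ σ 0 = v} :=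
      (ih (V := {w // w ≠ v}) _ (hG.of_embedding (SimpleGraph.Embedding.induce _))
        (by simp [hn])).trans (card_peo_induce_le_card_peo_apply_zero_eq hv)
    calc 2 ^ (m + 1 - 1) = 2 ^ (m - 1) + 2 ^ (m - 1) := by
          rw [Nat.add_sub_cancel, ← two_mul, ← pow_succ', Nat.sub_add_cancel hm]
      _ ≤ _ := add_le_add (hfiber v₁ h₁) (hfiber v₂ h₂)
      _ ≤ _ := Nat.card_subtype_add_card_subtype_le (fun _ h => h.1) (fun _ h => h.1)
          fun _ h h' => hne (h.2.symm.trans h'.2)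

/-- Every finite chordal simple graph on `n ≥ 1` vertices admits at least
`2^(n−1)` perfect elimination orderings. -/
theorem chordal_many_peo {V : Type*} [Fintype V] {n : ℕ}
    (G : SimpleGraph V) (hG : G.IsChordal)
    (hn : Fintype.card V = n) (hn1 : 1 ≤ n) :
    2 ^ (n - 1) ≤ Nat.card {σ : Fin n ≃ V // IsPerfectEliminationOrdering G σ} :=
  chordal_many_peo_general G hG hn
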